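/- Let λ > 0, let m ≥ 2, let c_1 ≤ c_2 ≤ … ≤ c_m be real numbers (the x-coordinates of the points of V' sorted left to right on ℓ), and let f_1, …, f_m be real numbers (f_i being the total weight of the points covered by the disk of radius λ centered at the i-th point). Define edge weights in the extended reals by W(i,j) = +∞ if c_j − c_i < 2λ, and W(i,j) = −(f_i + f_j) otherwise, for i < j. Then W satisfies the concave Monge property: for all indices with i < i+1 < j < j+1 ≤ m, W(i,j) + W(i+1, j+1) ≤ W(i, j+1) + W(i+1, j). -/
import Mathlib


/-- Edge weights of the complete weighted DAG `G'` (indices `0, …, m-1`, sorted by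
`x`-coordinate): `W(i,j) = +∞` if `c j − c i < 2λ`, and `W(i,j) = −(f i + f j)`
otherwise, valued in the extended reals. -/
noncomputable def edgeWeight (lam : ℝ) (c f : ℕ → ℝ) (i j : ℕ) : EReal :=
  if c j - c i < 2 * lam then ⊤ else ((-(f i + f j) : ℝ) : EReal)

lemma edgeWeight_ne_bot (lam : ℝ) (c f : ℕ → ℝ) (i j : ℕ) :
    edgeWeight lam c f i j ≠ ⊥ := by
  unfold edgeWeight
  split
  · simp
  · exact EReal.coe_ne_bot _

/-- Let `λ > 0`, `m ≥ 2`, let `c 0 ≤ c 1 ≤ … ≤ c (m-1)` be the sorted `x`-coordinates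
of the points of `V'` on `ℓ` and `f i` the total weight of the points covered by the
disk of radius `λ` centered at the `i`-th point.  Then the edge weights
`W(i,j) = +∞` if `c j − c i < 2λ` and `W(i,j) = −(f i + f j)` otherwise satisfy the
concave Monge property: for all `i < i+1 < j < j+1 < m`,
`W(i,j) + W(i+1,j+1) ≤ W(i,j+1) + W(i+1,j)`. -/
theorem stmt_7 (lam : ℝ) (hlam : 0 < lam) (m : ℕ) (hm : 2 ≤ m) (c f : ℕ → ℝ)
    (hc : ∀ i j : ℕ, i ≤ j → j < m → c i ≤ c j)
    (i j : ℕ) (hij : i + 1 < j) (hjm : j + 1 < m) :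
    edgeWeight lam c f i j + edgeWeight lam c f (i + 1) (j + 1) ≤
      edgeWeight lam c f i (j + 1) + edgeWeight lam c f (i + 1) j := by
  have hjm' : j < m := Nat.lt_of_succ_lt hjm
  have hci : c i ≤ c (i + 1) := hc i (i + 1) (Nat.le_succ i) (by omega)
  have hcj : c j ≤ c (j + 1) := hc j (j + 1) (Nat.le_succ j) hjm
  by_cases h : c j - c (i + 1) < 2 * lam
  · have : edgeWeight lam c f (i + 1) j = ⊤ := if_pos h
    rw [this, EReal.add_top_of_ne_bot (edgeWeight_ne_bot lam c f i (j + 1))]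
    exact le_top
  · push_neg at h
    have h1 : ¬ c j - c i < 2 * lam := by push_neg; linarith
    have h2 : ¬ c (j + 1) - c (i + 1) < 2 * lam := by push_neg; linarith
    have h3 : ¬ c (j + 1) - c i < 2 * lam := by push_neg; linarith
    have h4 : ¬ c j - c (i + 1) < 2 * lam := by push_neg; linarith
    unfold edgeWeight
    rw [if_neg h1, if_neg h2, if_neg h3, if_neg h4]
    rw [← EReal.coe_add, ← EReal.coe_add, EReal.coe_le_coe_iff]
    linarith
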